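/- arXiv:2505.06824 — 2 statements merged into one kernel-verified Lean document; each statement's English description precedes it below -/
import Mathlib

section
/- (Soundness of CIO.) Every formula of the language L_D that is derivable in the calculus CIO is valid in every causal deontic model. -/
/-- A signature `(U, V, R)`: finite set of exogenous variables `U`, finite set of
endogenous variables `V` (disjoint from `U`, modelled by a sum type), and for each
variable a finite nonempty range of values. -/
structure Signature where
  U : Type
  V : Type
  R : U ⊕ V → Type
  fintypeU : Fintype U
  fintypeV : Fintype V
  decEqU : DecidableEq U
  decEqV : DecidableEq V
  fintypeR : ∀ X, Fintype (R X)
  nonemptyR : ∀ X, Nonempty (R X)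
  decEqR : ∀ X, DecidableEq (R X)

attribute [instance] Signature.fintypeU Signature.fintypeV Signature.decEqU
  Signature.decEqV Signature.fintypeR Signature.nonemptyR Signature.decEqR

/-- An assignment of values to all the variables. -/
abbrev Assignment (S : Signature) : Type := ∀ X : S.U ⊕ S.V, S.R X

/-- An exogenous setting: an assignment of values to all exogenous variables. -/
abbrev ExoSetting (S : Signature) : Type := ∀ X : S.U, S.R (Sum.inl X)

/-- An assignment of values to all variables except `X` (i.e. `A^{-X}`). -/
abbrev CoAssignment (S : Signature) (X : S.U ⊕ S.V) : Type :=
  ∀ Y : S.U ⊕ S.V, Y ≠ X → S.R Y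

/-- The restriction `A^{-X}` of an assignment. -/
def Assignment.minus {S : Signature} (A : Assignment S) (X : S.U ⊕ S.V) :
    CoAssignment S X := fun Y _ => A Y

/-- A set of structural functions: for each endogenous variable `X`, a function
giving the value of `X` from the values of all the other variables. -/
abbrev StructFns (S : Signature) : Type :=
  ∀ X : S.V, CoAssignment S (Sum.inr X) → S.R (Sum.inr X)

/-- `A` complies with `F` iff `A(X) = f_X(A^{-X})` for every endogenous `X`. -/
def Complies (S : Signature) (F : StructFns S) (A : Assignment S) : Prop :=
  ∀ X : S.V, A (Sum.inr X) = F X (A.minus (Sum.inr X))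

/-- `F` is recursive (acyclic): there is a strict total order on the variables such
that each `f_X` does not depend on the values of variables strictly above `X`. -/
def Recursive (S : Signature) (F : StructFns S) : Prop :=
  ∃ lt : (S.U ⊕ S.V) → (S.U ⊕ S.V) → Prop,
    IsStrictTotalOrder (S.U ⊕ S.V) lt ∧
    ∀ X : S.V, ∀ B B' : CoAssignment S (Sum.inr X),
      (∀ Y (hne : Y ≠ Sum.inr X), lt Y (Sum.inr X) → B Y hne = B' Y hne) →
      F X B = F X B'

/-- An intervention tuple `X⃗ = x⃗`: a list of endogenous variables with values. -/
abbrev Ivn (S : Signature) : Type := List ((X : S.V) × S.R (Sum.inr X))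

/-- The variables of an intervention tuple. -/
def Ivn.fsts {S : Signature} (l : Ivn S) : List S.V := l.map Sigma.fst

/-- The variables in the tuple are pairwise distinct. -/
def Ivn.Distinct {S : Signature} (l : Ivn S) : Prop := (l.map Sigma.fst).Nodup

/-- The intervened structural functions `F_{X⃗ = x⃗}`: each `f_{X_i}` is replaced by
the constant function returning `x_i`; the other functions are unchanged. -/
noncomputable def applyIvn (S : Signature) (F : StructFns S) (l : Ivn S) : StructFns S :=
  fun X B =>
    if h : ∃ x : S.R (Sum.inr X), (⟨X, x⟩ : (Y : S.V) × S.R (Sum.inr Y)) ∈ l then h.choose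
    else F X B

/-- Formulas of the language `L_D`:
atoms `X = x`, negation, conjunction, intervention formulas `[X⃗=x⃗]φ`,
priority formulas `X=x ≺ Y=y`, and context formulas `φ^u`. -/
inductive Formula (S : Signature) : Type where
  | atom (X : S.U ⊕ S.V) (x : S.R X) : Formula S
  | neg (φ : Formula S) : Formula S
  | and (φ ψ : Formula S) : Formula S
  | intervene (l : Ivn S) (φ : Formula S) : Formula S
  | prec (X : S.U ⊕ S.V) (x : S.R X) (Y : S.U ⊕ S.V) (y : S.R Y) : Formula S
  | ctx (u : ExoSetting S) (φ : Formula S) : Formula S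

def Formula.imp {S : Signature} (φ ψ : Formula S) : Formula S := .neg (.and φ (.neg ψ))

def Formula.or {S : Signature} (φ ψ : Formula S) : Formula S := .neg (.and (.neg φ) (.neg ψ))

def Formula.iffF {S : Signature} (φ ψ : Formula S) : Formula S := .and (φ.imp ψ) (ψ.imp φ)

/-- Atoms `X = x`. -/
abbrev SAtom (S : Signature) : Type := (X : S.U ⊕ S.V) × S.R X

/-- A priority structure `P = (Φ, ≪)`: a set of atoms together with a
priority relation among atoms. -/
structure Priority (S : Signature) where
  dom : Set (SAtom S)
  lt : SAtom S → SAtom S → Prop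

/-- The priority relation is a strict partial order (asymmetric and transitive). -/
def Priority.Strict {S : Signature} (P : Priority S) : Prop :=
  (∀ a b, P.lt a b → ¬ P.lt b a) ∧ (∀ a b c, P.lt a b → P.lt b c → P.lt a c)

open Classical in
/-- The unique assignment complying with `F` whose values on the exogenous
variables are given by `u` (when `F` is recursive it exists and is unique). -/
noncomputable def solve (S : Signature) (F : StructFns S) (u : ExoSetting S) : Assignment S :=
  if h : ∃ A : Assignment S, Complies S F A ∧ ∀ X : S.U, A (Sum.inl X) = u X then h.choose
  else fun X => Classical.arbitrary (S.R X)

/-- Truth of a formula at structural functions `F`, priority `P` and actual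
assignment `A`. -/
def Sat (S : Signature) : StructFns S → Priority S → Assignment S → Formula S → Prop
  | _, _, A, .atom X x => A X = x
  | F, P, A, .neg φ => ¬ Sat S F P A φ
  | F, P, A, .and φ ψ => Sat S F P A φ ∧ Sat S F P A ψ
  | F, P, A, .intervene l φ =>
      Sat S (applyIvn S F l) P (solve S (applyIvn S F l) (fun X => A (Sum.inl X))) φ
  | _, P, _, .prec X x Y y => P.lt ⟨X, x⟩ ⟨Y, y⟩
  | F, P, _, .ctx u φ => Sat S F P (solve S F u) φ

/-- A causal deontic model: recursive structural functions, a priority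
structure which is a strict partial order, and an actual assignment complying
with the structural functions. -/
structure CDModel (S : Signature) where
  F : StructFns S
  P : Priority S
  A : Assignment S
  recF : Recursive S F
  strictP : P.Strict
  compliesA : Complies S F A

/-- Truth in a causal deontic model. -/
def CDModel.Sat {S : Signature} (M : CDModel S) (φ : Formula S) : Prop :=
  _root_.Sat S M.F M.P M.A φ

/-- A falsum, available whenever the signature has at least one variable. -/
noncomputable def botF (S : Signature) (h : Nonempty (S.U ⊕ S.V)) : Formula S :=
  Formula.and (.atom (@Classical.arbitrary _ h) (Classical.arbitrary _))
    (.neg (.atom (@Classical.arbitrary _ h) (Classical.arbitrary _)))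

/-- A verum. -/
noncomputable def topF (S : Signature) (h : Nonempty (S.U ⊕ S.V)) : Formula S :=
  .neg (botF S h)

/-- Finite conjunction. -/
noncomputable def bigAnd (S : Signature) (h : Nonempty (S.U ⊕ S.V))
    (L : List (Formula S)) : Formula S :=
  L.foldr Formula.and (topF S h)

/-- Finite disjunction. -/
noncomputable def bigOr (S : Signature) (h : Nonempty (S.U ⊕ S.V))
    (L : List (Formula S)) : Formula S :=
  L.foldr Formula.or (botF S h)

/-- `φ` is (a substitution instance of) a propositional tautology: it is true under
every Boolean valuation of formulas which respects negation and conjunction. -/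
def IsTaut (S : Signature) (φ : Formula S) : Prop :=
  ∀ v : Formula S → Bool,
    (∀ ψ, v (.neg ψ) = !v ψ) →
    (∀ ψ χ, v (.and ψ χ) = (v ψ && v χ)) →
    v φ = true

/-- The formula `U⃗ = u`: the conjunction of the atoms stating that each exogenous
variable takes its value under `u`. -/
noncomputable def exoConj (S : Signature) (h : Nonempty (S.U ⊕ S.V))
    (u : ExoSetting S) : Formula S :=
  bigAnd S h ((Finset.univ : Finset S.U).toList.map fun X => Formula.atom (Sum.inl X) (u X))

/-- The merged intervention `X⃗'=x⃗', Y⃗=y⃗` where `X⃗'=x⃗'` is the restriction of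
`X⃗=x⃗` to the variables of `X⃗` not occurring in `Y⃗`. -/
def mergeIvn {S : Signature} (l₁ l₂ : Ivn S) : Ivn S :=
  (l₁.filter fun p => decide (p.1 ∉ Ivn.fsts l₂)) ++ l₂

/-- The conjuncts `[X⃗=x⃗,Y=y]Z=z' ∧ [X⃗=x⃗,Y=y']Z=z` (over all tuples `X⃗=x⃗` of
distinct endogenous variables excluding `Y` and `Z`, and all values `y ≠ y'`,
`z ≠ z'`) whose disjunction is the causal-influence abbreviation `Y ⇝ Z`. -/
def InfluenceConjuncts (S : Signature) (Y Z : S.V) : Set (Formula S) :=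
  { φ | ∃ (l : Ivn S) (y y' : S.R (Sum.inr Y)) (z z' : S.R (Sum.inr Z)),
      Ivn.Distinct (l ++ [⟨Y, y⟩]) ∧ Z ∉ Ivn.fsts l ∧ Z ≠ Y ∧ y ≠ y' ∧ z ≠ z' ∧
      φ = Formula.and (.intervene (l ++ [⟨Y, y⟩]) (.atom (Sum.inr Z) z'))
            (.intervene (l ++ [⟨Y, y'⟩]) (.atom (Sum.inr Z) z)) }

/-- The Hilbert-style calculus CIO. -/
inductive Deriv (S : Signature) : Formula S → Prop where
  /-- all propositional tautologies -/
  | taut (φ : Formula S) : IsTaut S φ → Deriv S φ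
  /-- modus ponens -/
  | mp (φ ψ : Formula S) : Deriv S (φ.imp ψ) → Deriv S φ → Deriv S ψ
  /-- necessitation for interventions -/
  | necI (l : Ivn S) (hl : Ivn.Distinct l) (φ : Formula S) :
      Deriv S φ → Deriv S (.intervene l φ)
  /-- necessitation for contexts -/
  | necC (u : ExoSetting S) (φ : Formula S) : Deriv S φ → Deriv S (.ctx u φ)
  /-- A1 -/
  | ax1 (l : Ivn S) (hl : Ivn.Distinct l) (Y : S.V) (y y' : S.R (Sum.inr Y)) (h : y ≠ y') :
      Deriv S ((Formula.intervene l (.atom (Sum.inr Y) y)).imp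
        (.neg (.intervene l (.atom (Sum.inr Y) y'))))
  /-- A2 -/
  | ax2 (l : Ivn S) (hl : Ivn.Distinct l) (Y : S.V) :
      Deriv S (bigOr S ⟨Sum.inr Y⟩
        (((Finset.univ : Finset (S.R (Sum.inr Y))).toList).map
          fun y => Formula.intervene l (.atom (Sum.inr Y) y)))
  /-- A3 -/
  | ax3 (l : Ivn S) (hl : Ivn.Distinct l) (Y : S.V) (hY : Y ∉ Ivn.fsts l)
      (y : S.R (Sum.inr Y)) (Z : S.V) (hZ : Z ∉ Ivn.fsts l) (hZY : Z ≠ Y)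
      (z : S.R (Sum.inr Z)) :
      Deriv S ((Formula.and (.intervene l (.atom (Sum.inr Y) y))
          (.intervene l (.atom (Sum.inr Z) z))).imp
        (.intervene (l ++ [⟨Y, y⟩]) (.atom (Sum.inr Z) z)))
  /-- A4 -/
  | ax4 (l : Ivn S) (Y : S.V) (y : S.R (Sum.inr Y)) (h : Ivn.Distinct (l ++ [⟨Y, y⟩])) :
      Deriv S (.intervene (l ++ [⟨Y, y⟩]) (.atom (Sum.inr Y) y))
  /-- A5: `(X_0 ⇝ X_1 ∧ ⋯ ∧ X_{k-1} ⇝ X_k) → ¬(X_k ⇝ X_0)` for pairwise distinct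
  endogenous variables, where each `X_i ⇝ X_j` is (any enumeration of) the
  disjunction of its influence conjuncts. -/
  | ax5 (k : ℕ) (X : Fin (k + 1) → S.V) (hinj : Function.Injective X)
      (L : Fin (k + 1) → List (Formula S))
      (hL : ∀ i : Fin k, ∀ ψ : Formula S,
        ψ ∈ L i.castSucc ↔ ψ ∈ InfluenceConjuncts S (X i.castSucc) (X i.succ))
      (hLast : ∀ ψ : Formula S,
        ψ ∈ L (Fin.last k) ↔ ψ ∈ InfluenceConjuncts S (X (Fin.last k)) (X 0)) :
      Deriv S ((bigAnd S ⟨Sum.inr (X 0)⟩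
          (List.ofFn fun i : Fin k => bigOr S ⟨Sum.inr (X 0)⟩ (L i.castSucc))).imp
        (.neg (bigOr S ⟨Sum.inr (X 0)⟩ (L (Fin.last k)))))
  /-- A_¬ -/
  | axNeg (l : Ivn S) (hl : Ivn.Distinct l) (φ : Formula S) :
      Deriv S ((Formula.intervene l (.neg φ)).iffF (.neg (.intervene l φ)))
  /-- A_∧ -/
  | axAnd (l : Ivn S) (hl : Ivn.Distinct l) (φ ψ : Formula S) :
      Deriv S ((Formula.intervene l (.and φ ψ)).iffF
        (.and (.intervene l φ) (.intervene l ψ)))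
  /-- A_[][] -/
  | axComp (l₁ l₂ : Ivn S) (h₁ : Ivn.Distinct l₁) (h₂ : Ivn.Distinct l₂) (φ : Formula S) :
      Deriv S ((Formula.intervene l₁ (.intervene l₂ φ)).iffF
        (.intervene (mergeIvn l₁ l₂) φ))
  /-- Asym -/
  | axAsym (X : S.U ⊕ S.V) (x : S.R X) (Y : S.U ⊕ S.V) (y : S.R Y) :
      Deriv S ((Formula.prec X x Y y).imp (.neg (.prec Y y X x)))
  /-- Trans -/
  | axTrans (X : S.U ⊕ S.V) (x : S.R X) (Y : S.U ⊕ S.V) (y : S.R Y)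
      (Z : S.U ⊕ S.V) (z : S.R Z) :
      Deriv S ((Formula.and (.prec X x Y y) (.prec Y y Z z)).imp (.prec X x Z z))
  /-- G_∧ -/
  | gAnd (u : ExoSetting S) (φ ψ : Formula S) :
      Deriv S ((Formula.ctx u (.and φ ψ)).iffF (.and (.ctx u φ) (.ctx u ψ)))
  /-- G_¬ -/
  | gNeg (u : ExoSetting S) (φ : Formula S) :
      Deriv S ((Formula.neg (.ctx u φ)).iffF (.ctx u (.neg φ)))
  /-- G_u -/
  | gCtx (u u' : ExoSetting S) (φ : Formula S) :
      Deriv S ((Formula.ctx u' (.ctx u φ)).iffF (.ctx u φ))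
  /-- G_[] -/
  | gInt (u : ExoSetting S) (l : Ivn S) (hl : Ivn.Distinct l) (φ : Formula S) :
      Deriv S ((Formula.ctx u (.intervene l φ)).iffF (.intervene l (.ctx u φ)))
  /-- Self -/
  | selfAx (h : Nonempty (S.U ⊕ S.V)) (u : ExoSetting S) :
      Deriv S (.ctx u (exoConj S h u))
  /-- Incl -/
  | inclAx (h : Nonempty (S.U ⊕ S.V)) (u : ExoSetting S) (φ : Formula S) :
      Deriv S ((Formula.and (exoConj S h u) φ).imp (.ctx u φ))

/-- Derivability from a set of premises. -/
inductive DerivFrom (S : Signature) (Γ : Set (Formula S)) : Formula S → Prop where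
  | mem (φ : Formula S) : φ ∈ Γ → DerivFrom S Γ φ
  | thm (φ : Formula S) : Deriv S φ → DerivFrom S Γ φ
  | mp (φ ψ : Formula S) : DerivFrom S Γ (φ.imp ψ) → DerivFrom S Γ φ → DerivFrom S Γ ψ

/-- `Γ` is CIO-consistent. -/
def Consistent (S : Signature) (Γ : Set (Formula S)) : Prop :=
  ¬ ∃ φ : Formula S, DerivFrom S Γ φ ∧ DerivFrom S Γ (.neg φ)

/-- `Γ` is maximal CIO-consistent: consistent, and no proper superset is consistent. -/
def MCS (S : Signature) (Γ : Set (Formula S)) : Prop :=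
  Consistent S Γ ∧ ∀ Δ : Set (Formula S), Γ ⊆ Δ → Consistent S Δ → Δ = Γ

/-!
Soundness is checked rule by rule. A recursive system of structural functions has, for every
exogenous setting, exactly one complying assignment (built by well-founded recursion along an
order witnessing recursiveness), and most axioms reduce to this uniqueness: for A3, the solution
of `F_{X⃗=x⃗}` in which `Y = y` already complies with `F_{X⃗=x⃗,Y=y}`. For A5, a true instance
of `Y ⇝ Z` forces `Y` strictly below `Z` in any such order, because solutions of interventions
differing only at `Y` agree below `Y`; a cycle of influences would then be a cycle of a strict
order.
-/

section

variable {S : Signature}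

theorem Relation.not_rel_last_zero_of_chain {α : Type*} {r : α → α → Prop} [IsTrans α r]
    [Std.Irrefl r] {k : ℕ} {f : Fin (k + 1) → α}
    (hf : ∀ i : Fin k, r (f i.castSucc) (f i.succ)) :
    ¬ r (f (Fin.last k)) (f 0) := by
  have hreach : ∀ i, Relation.ReflTransGen r (f 0) (f i) :=
    Fin.induction .refl fun i ih => ih.tail (hf i)
  intro hlast
  have hcycle := Relation.TransGen.tail' (hreach (Fin.last k)) hlast
  rw [Relation.transGen_eq_self] at hcycle
  exact irrefl _ hcycle

theorem Ivn.mem_fsts {l : Ivn S} {X : S.V} :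
    X ∈ l.fsts ↔ ∃ x, (⟨X, x⟩ : (Y : S.V) × S.R (Sum.inr Y)) ∈ l :=
  List.mem_keys

@[simp]
theorem Ivn.fsts_singleton (p : (X : S.V) × S.R (Sum.inr X)) : Ivn.fsts [p] = [p.1] := rfl

theorem Ivn.notMem_fsts_of_distinct_append_singleton {l : Ivn S} {Y : S.V}
    {y : S.R (Sum.inr Y)} (h : Ivn.Distinct (l ++ [⟨Y, y⟩])) : Y ∉ l.fsts := by
  simp only [Ivn.Distinct, List.map_append, List.nodup_append] at h
  exact fun hY => h.2.2 Y hY Y (List.mem_singleton_self _) rfl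

theorem applyIvn_of_mem (F : StructFns S) {l : Ivn S} (hl : l.Distinct) {X : S.V}
    {x : S.R (Sum.inr X)} (hx : ⟨X, x⟩ ∈ l) (B : CoAssignment S (Sum.inr X)) :
    applyIvn S F l X B = x := by
  have hex : ∃ x, (⟨X, x⟩ : (Y : S.V) × S.R (Sum.inr Y)) ∈ l := ⟨x, hx⟩
  rw [applyIvn, dif_pos hex]
  exact List.NodupKeys.eq_of_mk_mem (β := fun X : S.V => S.R (Sum.inr X)) hl
    hex.choose_spec hx

theorem applyIvn_of_notMem (F : StructFns S) {l : Ivn S} {X : S.V} (hX : X ∉ l.fsts)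
    (B : CoAssignment S (Sum.inr X)) : applyIvn S F l X B = F X B :=
  dif_neg (mt Ivn.mem_fsts.2 hX)

theorem applyIvn_applyIvn (F : StructFns S) (l₁ l₂ : Ivn S) :
    applyIvn S (applyIvn S F l₁) l₂ = applyIvn S F (mergeIvn l₁ l₂) := by
  funext X B
  have hmem : ∀ x, (⟨X, x⟩ : (Y : S.V) × S.R (Sum.inr Y)) ∈ mergeIvn l₁ l₂ ↔
      (⟨X, x⟩ ∈ l₁ ∧ X ∉ l₂.fsts) ∨ ⟨X, x⟩ ∈ l₂ := by
    simp [mergeIvn]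
  by_cases h₂ : X ∈ l₂.fsts
  · have hmem₂ : ∀ x, (⟨X, x⟩ : (Y : S.V) × S.R (Sum.inr Y)) ∈ mergeIvn l₁ l₂ ↔
        ⟨X, x⟩ ∈ l₂ := by simp [hmem, h₂]
    simp only [applyIvn, hmem₂, dif_pos (Ivn.mem_fsts.1 h₂)]
  · have hmem₁ : ∀ x, (⟨X, x⟩ : (Y : S.V) × S.R (Sum.inr Y)) ∈ mergeIvn l₁ l₂ ↔
        ⟨X, x⟩ ∈ l₁ := by simp [hmem, h₂, List.notMem_keys.1 h₂]
    rw [applyIvn_of_notMem _ h₂]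
    simp only [applyIvn, hmem₁]

theorem mergeIvn_singleton {l : Ivn S} {Y : S.V} (hY : Y ∉ l.fsts) (y : S.R (Sum.inr Y)) :
    mergeIvn l [⟨Y, y⟩] = l ++ [⟨Y, y⟩] := by
  rw [mergeIvn, List.filter_eq_self.2]
  intro p hp
  simpa using fun h : p.1 = Y => hY (h ▸ List.mem_keys_of_mem hp)

theorem applyIvn_append_singleton (F : StructFns S) {l : Ivn S} {Y : S.V} (hY : Y ∉ l.fsts)
    (y : S.R (Sum.inr Y)) :
    applyIvn S F (l ++ [⟨Y, y⟩]) = applyIvn S (applyIvn S F l) [⟨Y, y⟩] := by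
  rw [applyIvn_applyIvn, mergeIvn_singleton hY]

theorem Complies.applyIvn_singleton {F : StructFns S} {A : Assignment S}
    (hA : Complies S F A) (Y : S.V) : Complies S (applyIvn S F [⟨Y, A (Sum.inr Y)⟩]) A := by
  intro V
  by_cases hVY : V = Y
  · subst hVY
    exact (applyIvn_of_mem F (by simp [Ivn.Distinct]) (List.mem_singleton_self _) _).symm
  · rw [applyIvn_of_notMem F (by simpa using hVY)]
    exact hA V

def DependsOnlyBelow (lt : S.U ⊕ S.V → S.U ⊕ S.V → Prop) (F : StructFns S) : Prop :=
  ∀ X : S.V, ∀ B B' : CoAssignment S (Sum.inr X),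
    (∀ Y (hne : Y ≠ Sum.inr X), lt Y (Sum.inr X) → B Y hne = B' Y hne) → F X B = F X B'

namespace DependsOnlyBelow

variable {lt : S.U ⊕ S.V → S.U ⊕ S.V → Prop} {F : StructFns S}

theorem applyIvn (hF : DependsOnlyBelow lt F) (l : Ivn S) :
    DependsOnlyBelow lt (_root_.applyIvn S F l) := fun X B B' hBB' => by
  unfold _root_.applyIvn
  split
  · rfl
  · exact hF X B B' hBB'

theorem eq_of_complies (hF : DependsOnlyBelow lt F) (wf : WellFounded lt) {F' : StructFns S}
    {D : Set (S.U ⊕ S.V)} (hD : ∀ X ∈ D, ∀ Y, lt Y X → Y ∈ D)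
    (hFF' : ∀ V, Sum.inr V ∈ D → F V = F' V) {A A' : Assignment S} (hA : Complies S F A)
    (hA' : Complies S F' A') (hexo : ∀ X, A (Sum.inl X) = A' (Sum.inl X)) :
    ∀ X ∈ D, A X = A' X := by
  intro X
  induction X using wf.induction with
  | _ X ih =>
    intro hX
    cases X with
    | inl a => exact hexo a
    | inr V =>
      rw [hA V, hA' V, ← hFF' V hX]
      exact hF V _ _ fun Y _ hY => ih Y hY (hD _ hX Y hY)

end DependsOnlyBelow

namespace Recursive

variable {F : StructFns S}

theorem applyIvn (hF : Recursive S F) (l : Ivn S) : Recursive S (_root_.applyIvn S F l) :=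
  let ⟨lt, hsto, hdep⟩ := hF
  ⟨lt, hsto, DependsOnlyBelow.applyIvn hdep l⟩

theorem exists_wellFounded (hF : Recursive S F) :
    ∃ lt, IsStrictTotalOrder _ lt ∧ WellFounded lt ∧ DependsOnlyBelow lt F := by
  obtain ⟨lt, hsto, hdep⟩ := hF
  exact ⟨lt, hsto, Finite.wellFounded_of_trans_of_irrefl lt, hdep⟩

open Classical in
theorem exists_complies (hF : Recursive S F) (u : ExoSetting S) :
    ∃ A, Complies S F A ∧ ∀ X, A (Sum.inl X) = u X := by
  obtain ⟨lt, -, wf, hdep⟩ := hF.exists_wellFounded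
  let A : Assignment S := wf.fix fun X rec => match X, rec with
    | .inl a, _ => u a
    | .inr V, rec =>
      F V fun Y _ => if h : lt Y (.inr V) then rec Y h else Classical.arbitrary _
  refine ⟨A, fun V => ?_, fun X => wf.fix_eq _ _⟩
  rw [show A (.inr V) = _ from wf.fix_eq _ _]
  exact hdep V _ _ fun Y _ hY => dif_pos hY

theorem eq_of_complies (hF : Recursive S F) {A A' : Assignment S} (hA : Complies S F A)
    (hA' : Complies S F A') (hexo : ∀ X, A (Sum.inl X) = A' (Sum.inl X)) : A = A' := by
  obtain ⟨lt, -, wf, hdep⟩ := hF.exists_wellFounded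
  funext X
  exact hdep.eq_of_complies wf (D := Set.univ) (fun _ _ _ _ => trivial) (fun _ _ => rfl)
    hA hA' hexo X trivial

theorem solve_spec (hF : Recursive S F) (u : ExoSetting S) :
    Complies S F (solve S F u) ∧ ∀ X, solve S F u (Sum.inl X) = u X := by
  rw [solve, dif_pos (hF.exists_complies u)]
  exact (hF.exists_complies u).choose_spec

theorem complies_solve (hF : Recursive S F) (u : ExoSetting S) : Complies S F (solve S F u) :=
  (hF.solve_spec u).1

theorem exo_solve (hF : Recursive S F) (u : ExoSetting S) :
    (fun X => solve S F u (Sum.inl X)) = u :=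
  funext (hF.solve_spec u).2

theorem solve_eq (hF : Recursive S F) {A : Assignment S} {u : ExoSetting S}
    (hA : Complies S F A) (hexo : ∀ X, A (Sum.inl X) = u X) : solve S F u = A :=
  hF.eq_of_complies (hF.complies_solve u) hA fun X => by rw [hexo, (hF.solve_spec u).2]

end Recursive

theorem solve_append_singleton_eq_of_lt {lt : S.U ⊕ S.V → S.U ⊕ S.V → Prop}
    (hsto : IsStrictTotalOrder _ lt) {F : StructFns S} (hF : DependsOnlyBelow lt F) {l : Ivn S}
    {Y : S.V} (hY : Y ∉ l.fsts) (y y' : S.R (Sum.inr Y)) (u : ExoSetting S) {W : S.U ⊕ S.V}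
    (hW : lt W (Sum.inr Y)) :
    solve S (applyIvn S F (l ++ [⟨Y, y⟩])) u W =
      solve S (applyIvn S F (l ++ [⟨Y, y'⟩])) u W := by
  have hrec : Recursive S F := ⟨lt, hsto, hF⟩
  have hagree : ∀ V : S.V, lt (Sum.inr V) (Sum.inr Y) →
      applyIvn S F (l ++ [⟨Y, y⟩]) V = applyIvn S F (l ++ [⟨Y, y'⟩]) V := by
    intro V hV
    have hVY : V ≠ Y := by
      rintro rfl
      exact irrefl _ hV
    funext B
    rw [applyIvn_append_singleton F hY, applyIvn_append_singleton F hY,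
      applyIvn_of_notMem (l := [⟨Y, y⟩]) _ (by simpa using hVY),
      applyIvn_of_notMem (l := [⟨Y, y'⟩]) _ (by simpa using hVY)]
  have hrec₁ := hrec.applyIvn (l ++ [⟨Y, y⟩])
  have hrec₂ := hrec.applyIvn (l ++ [⟨Y, y'⟩])
  refine (hF.applyIvn _).eq_of_complies (Finite.wellFounded_of_trans_of_irrefl lt)
    (D := {X | lt X (Sum.inr Y)}) (fun _ hX _ hZ => _root_.trans hZ hX) hagree
    (hrec₁.complies_solve u) (hrec₂.complies_solve u) (fun X => ?_) W hW
  rw [(hrec₁.solve_spec u).2, (hrec₂.solve_spec u).2]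

section Sat

variable {F : StructFns S} {P : Priority S} {A : Assignment S}

theorem sat_imp {φ ψ : Formula S} : Sat S F P A (φ.imp ψ) ↔ (Sat S F P A φ → Sat S F P A ψ) :=
  not_and_not_right

theorem sat_iffF {φ ψ : Formula S} :
    Sat S F P A (φ.iffF ψ) ↔ (Sat S F P A φ ↔ Sat S F P A ψ) :=
  (and_congr sat_imp sat_imp).trans iff_iff_implies_and_implies.symm

theorem sat_bigAnd {h : Nonempty (S.U ⊕ S.V)} {L : List (Formula S)} :
    Sat S F P A (bigAnd S h L) ↔ ∀ ψ ∈ L, Sat S F P A ψ := by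
  induction L with
  | nil => exact iff_of_true (not_and_not_right.2 id) (by simp)
  | cons χ L ih => exact (and_congr_right' ih).trans List.forall_mem_cons.symm

theorem sat_bigOr {h : Nonempty (S.U ⊕ S.V)} {L : List (Formula S)} :
    Sat S F P A (bigOr S h L) ↔ ∃ ψ ∈ L, Sat S F P A ψ := by
  induction L with
  | nil => exact iff_of_false (fun h => h.2 h.1) (by simp)
  | cons χ L ih =>
    exact (not_and_or.trans (or_congr not_not (not_not.trans ih))).trans (by simp)

theorem sat_exoConj {h : Nonempty (S.U ⊕ S.V)} {u : ExoSetting S} :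
    Sat S F P A (exoConj S h u) ↔ ∀ X, A (Sum.inl X) = u X := by
  simp [exoConj, sat_bigAnd, Sat]

theorem sat_of_isTaut {φ : Formula S} (hφ : IsTaut S φ) : Sat S F P A φ := by
  classical
  exact of_decide_eq_true
    (hφ (fun ψ => decide (Sat S F P A ψ))
      (fun _ => decide_not (h := Classical.propDecidable _))
      (fun _ _ => Bool.decide_and _ _ (dpq := Classical.propDecidable _)))

theorem lt_of_sat_influence {lt : S.U ⊕ S.V → S.U ⊕ S.V → Prop}
    (hsto : IsStrictTotalOrder _ lt) (hF : DependsOnlyBelow lt F) {Y Z : S.V} {ψ : Formula S}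
    (hψ : ψ ∈ InfluenceConjuncts S Y Z) (hsat : Sat S F P A ψ) : lt (Sum.inr Y) (Sum.inr Z) := by
  obtain ⟨l, y, y', z, z', hdist, -, hZY, -, hzz', rfl⟩ := hψ
  obtain ⟨hz', hz⟩ := hsat
  rcases trichotomous_of lt (Sum.inr Y) (Sum.inr Z) with hlt | heq | hgt
  · exact hlt
  · exact absurd (Sum.inr_injective heq).symm hZY
  · refine absurd ?_ hzz'
    rw [← hz, ← hz']
    exact (solve_append_singleton_eq_of_lt hsto hF
      (Ivn.notMem_fsts_of_distinct_append_singleton hdist) y y' _ hgt).symm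

end Sat

namespace CDModel

variable (M : CDModel S)

-- `M.Sat (.intervene l φ)` and `M.Sat (.ctx u φ)` unfold to `(M.intervene l).Sat φ` and
-- `(M.withSetting u).Sat φ`, which makes both necessitation rules immediate.
noncomputable def intervene (l : Ivn S) : CDModel S where
  F := applyIvn S M.F l
  P := M.P
  A := solve S (applyIvn S M.F l) fun X => M.A (Sum.inl X)
  recF := M.recF.applyIvn l
  strictP := M.strictP
  compliesA := (M.recF.applyIvn l).complies_solve _

noncomputable def withSetting (u : ExoSetting S) : CDModel S where
  F := M.F
  P := M.P
  A := solve S M.F u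
  recF := M.recF
  strictP := M.strictP
  compliesA := M.recF.complies_solve u

theorem sat_ax1 {l : Ivn S} {Y : S.V} {y y' : S.R (Sum.inr Y)} (hyy' : y ≠ y') :
    M.Sat ((Formula.intervene l (.atom (Sum.inr Y) y)).imp
      (.neg (.intervene l (.atom (Sum.inr Y) y')))) :=
  sat_imp.2 fun hy hy' => hyy' (hy.symm.trans hy')

theorem sat_ax2 (l : Ivn S) (Y : S.V) :
    M.Sat (bigOr S ⟨Sum.inr Y⟩ ((Finset.univ : Finset (S.R (Sum.inr Y))).toList.map
      fun y => Formula.intervene l (.atom (Sum.inr Y) y))) :=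
  sat_bigOr.2 ⟨_, List.mem_map_of_mem (Finset.mem_toList.2 (Finset.mem_univ _)), rfl⟩

theorem sat_ax3 {l : Ivn S} {Y : S.V} (hY : Y ∉ l.fsts) (y : S.R (Sum.inr Y)) (Z : S.V)
    (z : S.R (Sum.inr Z)) :
    M.Sat ((Formula.and (.intervene l (.atom (Sum.inr Y) y))
        (.intervene l (.atom (Sum.inr Z) z))).imp
      (.intervene (l ++ [⟨Y, y⟩]) (.atom (Sum.inr Z) z))) := by
  refine sat_imp.2 fun ⟨hy, hz⟩ => ?_
  have hcomp := (M.intervene l).compliesA.applyIvn_singleton Y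
  rw [show (M.intervene l).A (Sum.inr Y) = y from hy, intervene,
    ← applyIvn_append_singleton _ hY] at hcomp
  show solve S _ _ (Sum.inr Z) = z
  rw [(M.recF.applyIvn _).solve_eq hcomp ((M.recF.applyIvn l).solve_spec _).2]
  exact hz

theorem sat_ax4 {l : Ivn S} {Y : S.V} {y : S.R (Sum.inr Y)}
    (hl : Ivn.Distinct (l ++ [⟨Y, y⟩])) :
    M.Sat (.intervene (l ++ [⟨Y, y⟩]) (.atom (Sum.inr Y) y)) :=
  ((M.intervene _).compliesA Y).trans
    (applyIvn_of_mem _ hl (List.mem_append_right _ (List.mem_singleton_self _)) _)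

theorem sat_ax5 {k : ℕ} (X : Fin (k + 1) → S.V) (L : Fin (k + 1) → List (Formula S))
    (hL : ∀ i : Fin k, ∀ ψ, ψ ∈ L i.castSucc ↔ ψ ∈ InfluenceConjuncts S (X i.castSucc) (X i.succ))
    (hLast : ∀ ψ, ψ ∈ L (Fin.last k) ↔ ψ ∈ InfluenceConjuncts S (X (Fin.last k)) (X 0)) :
    M.Sat ((bigAnd S ⟨Sum.inr (X 0)⟩
        (List.ofFn fun i : Fin k => bigOr S ⟨Sum.inr (X 0)⟩ (L i.castSucc))).imp
      (.neg (bigOr S ⟨Sum.inr (X 0)⟩ (L (Fin.last k))))) := by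
  obtain ⟨lt, hsto, hF⟩ := M.recF
  refine sat_imp.2 fun hchain hcycle => ?_
  obtain ⟨ψ, hψ, hsat⟩ := sat_bigOr.1 hcycle
  refine Relation.not_rel_last_zero_of_chain (f := fun i => Sum.inr (X i)) (fun i => ?_)
    (lt_of_sat_influence hsto hF ((hLast ψ).1 hψ) hsat)
  obtain ⟨ψ', hψ', hsat'⟩ := sat_bigOr.1 (sat_bigAnd.1 hchain _ (List.mem_ofFn.2 ⟨i, rfl⟩))
  exact lt_of_sat_influence hsto hF ((hL i ψ').1 hψ') hsat'

theorem sat_axComp (l₁ l₂ : Ivn S) (φ : Formula S) :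
    M.Sat ((Formula.intervene l₁ (.intervene l₂ φ)).iffF (.intervene (mergeIvn l₁ l₂) φ)) := by
  refine sat_iffF.2 ?_
  simp only [_root_.Sat, (M.recF.applyIvn l₁).exo_solve, applyIvn_applyIvn]

theorem sat_gInt (u : ExoSetting S) (l : Ivn S) (φ : Formula S) :
    M.Sat ((Formula.ctx u (.intervene l φ)).iffF (.intervene l (.ctx u φ))) := by
  refine sat_iffF.2 ?_
  simp only [_root_.Sat, M.recF.exo_solve]

theorem sat_selfAx (h : Nonempty (S.U ⊕ S.V)) (u : ExoSetting S) :
    M.Sat (.ctx u (exoConj S h u)) :=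
  sat_exoConj.2 (M.recF.solve_spec u).2

theorem sat_inclAx (h : Nonempty (S.U ⊕ S.V)) (u : ExoSetting S) (φ : Formula S) :
    M.Sat ((Formula.and (exoConj S h u) φ).imp (.ctx u φ)) := by
  refine sat_imp.2 fun ⟨hu, hφ⟩ => ?_
  show _root_.Sat S M.F M.P (solve S M.F u) φ
  rwa [M.recF.solve_eq M.compliesA (sat_exoConj.1 hu)]

end CDModel

end

/-- soundness of CIO: every formula of the language `L_D` that is
derivable in the calculus CIO is valid in every causal deontic model. -/
theorem CIO_sound (S : Signature) (φ : Formula S) (h : Deriv S φ) :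
    ∀ M : CDModel S, M.Sat φ := by
  induction h with
  | taut _ hφ => exact fun _ => sat_of_isTaut hφ
  | mp _ _ _ _ ihImp ih => exact fun M => sat_imp.1 (ihImp M) (ih M)
  | necI l _ _ _ ih => exact fun M => ih (M.intervene l)
  | necC u _ _ ih => exact fun M => ih (M.withSetting u)
  | ax1 _ _ _ _ _ hyy' => exact fun M => M.sat_ax1 hyy'
  | ax2 l _ Y => exact fun M => M.sat_ax2 l Y
  | ax3 _ _ _ hY y Z _ _ z => exact fun M => M.sat_ax3 hY y Z z
  | ax4 _ _ _ hl => exact fun M => M.sat_ax4 hl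
  | ax5 _ X _ L hL hLast => exact fun M => M.sat_ax5 X L hL hLast
  | axNeg | axAnd | gAnd | gNeg | gCtx => exact fun _ => sat_iffF.2 Iff.rfl
  | axComp l₁ l₂ _ _ φ => exact fun M => M.sat_axComp l₁ l₂ φ
  | axAsym => exact fun M => sat_imp.2 (M.strictP.1 _ _)
  | axTrans => exact fun M => sat_imp.2 fun h => M.strictP.2 _ _ _ h.1 h.2
  | gInt u l _ φ => exact fun M => M.sat_gInt u l φ
  | selfAx h u => exact fun M => M.sat_selfAx h u
  | inclAx h u φ => exact fun M => M.sat_inclAx h u φ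
end

section
/- (Agreement lemma.) Let φ be a formula of L_D(S) in which no intervention operator occurs within the scope of another intervention operator, and let R be the set of intervention tuples X⃗=x⃗ such that [X⃗=x⃗] occurs in φ, together with the empty intervention. Let M=(S,F,P,A) and M'=(S,F',P,A) be causal deontic models over the same signature with the same priority ordering P and the same actual assignment A, and suppose that for every X⃗=x⃗ ∈ R and every exogenous setting u, the unique assignment complying with F_{X⃗=x⃗} with exogenous values u equals the unique assignment complying with F'_{X⃗=x⃗} with exogenous values u. Then M ⊨ φ if and only if M' ⊨ φ. -/
/-- `φ` contains no intervention operator at all. -/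
def Formula.ivnFree {S : Signature} : Formula S → Prop
  | .atom _ _ => True
  | .neg φ => φ.ivnFree
  | .and φ ψ => φ.ivnFree ∧ ψ.ivnFree
  | .intervene _ _ => False
  | .prec _ _ _ _ => True
  | .ctx _ φ => φ.ivnFree

/-- No intervention operator of `φ` occurs within the scope of another
intervention operator. -/
def Formula.noNested {S : Signature} : Formula S → Prop
  | .atom _ _ => True
  | .neg φ => φ.noNested
  | .and φ ψ => φ.noNested ∧ ψ.noNested
  | .intervene _ φ => φ.ivnFree
  | .prec _ _ _ _ => True
  | .ctx _ φ => φ.noNested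

/-- The set of intervention tuples `X⃗ = x⃗` such that `[X⃗=x⃗]` occurs in `φ`. -/
def Formula.ivns {S : Signature} : Formula S → Set (Ivn S)
  | .atom _ _ => ∅
  | .neg φ => φ.ivns
  | .and φ ψ => φ.ivns ∪ ψ.ivns
  | .intervene l φ => insert l φ.ivns
  | .prec _ _ _ _ => ∅
  | .ctx _ φ => φ.ivns

lemma exists_complies (S : Signature) (F : StructFns S) (hF : Recursive S F)
    (u : ExoSetting S) :
    ∃ A : Assignment S, Complies S F A ∧ ∀ X : S.U, A (Sum.inl X) = u X := by
  classical
  obtain ⟨lt, hsto, hdep⟩ := hF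
  haveI : IsStrictTotalOrder (S.U ⊕ S.V) lt := hsto
  have wf : WellFounded lt := Finite.wellFounded_of_trans_of_irrefl lt
  let f : ∀ X : S.U ⊕ S.V, (∀ Y, lt Y X → S.R Y) → S.R X := fun X rec =>
    match X, rec with
    | Sum.inl x, _ => u x
    | Sum.inr V, rec => F V (fun Y _ =>
        if h : lt Y (Sum.inr V) then rec Y h else Classical.arbitrary (S.R Y))
  let A : Assignment S := fun X => wf.fix f X
  have hAeq : ∀ X, A X = f X (fun Y _ => A Y) := fun X => wf.fix_eq f X
  refine ⟨A, ?_, ?_⟩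
  · intro V
    rw [hAeq (Sum.inr V)]
    exact hdep V _ _ (fun Y hne hlt => by simp [dif_pos hlt, Assignment.minus])
  · intro x
    rw [hAeq (Sum.inl x)]

lemma recursive_applyIvn (S : Signature) (F : StructFns S) (l : Ivn S)
    (hF : Recursive S F) : Recursive S (applyIvn S F l) := by
  obtain ⟨lt, hsto, hdep⟩ := hF
  refine ⟨lt, hsto, fun X B B' h => ?_⟩
  unfold applyIvn
  split
  · rfl
  · exact hdep X B B' h

lemma applyIvn_nil (S : Signature) (F : StructFns S) : applyIvn S F [] = F := by
  funext X B
  unfold applyIvn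
  rw [dif_neg]
  rintro ⟨x, hx⟩
  simp at hx

lemma solve_eq (S : Signature) (F F' : StructFns S) (u : ExoSetting S)
    (hex : ∃ A : Assignment S, Complies S F A ∧ ∀ X : S.U, A (Sum.inl X) = u X)
    (hex' : ∃ A : Assignment S, Complies S F' A ∧ ∀ X : S.U, A (Sum.inl X) = u X)
    (huniq : ∀ B B' : Assignment S,
        Complies S F B → (∀ X : S.U, B (Sum.inl X) = u X) →
        Complies S F' B' → (∀ X : S.U, B' (Sum.inl X) = u X) → B = B') :
    solve S F u = solve S F' u := by
  unfold solve
  rw [dif_pos hex, dif_pos hex']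
  exact huniq _ _ hex.choose_spec.1 hex.choose_spec.2
    hex'.choose_spec.1 hex'.choose_spec.2

lemma sat_ivnFree (S : Signature) (F F' : StructFns S) (P : Priority S)
    (hsolve : ∀ u : ExoSetting S, solve S F u = solve S F' u)
    (ψ : Formula S) (hψ : ψ.ivnFree) :
    ∀ A : Assignment S, Sat S F P A ψ ↔ Sat S F' P A ψ := by
  induction ψ with
  | atom X x => intro A; rfl
  | neg φ ih => intro A; exact not_congr (ih hψ A)
  | and φ χ ih1 ih2 => intro A; exact and_congr (ih1 hψ.1 A) (ih2 hψ.2 A)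
  | intervene l φ ih => exact absurd hψ id
  | prec X x Y y => intro A; rfl
  | ctx u φ ih =>
      intro A
      show Sat S F P (solve S F u) φ ↔ Sat S F' P (solve S F' u) φ
      rw [hsolve u]
      exact ih hψ _

lemma sat_noNested (S : Signature) (F F' : StructFns S) (P : Priority S)
    (φ : Formula S) (hφ : φ.noNested)
    (hsolve : ∀ l ∈ insert ([] : Ivn S) φ.ivns, ∀ u : ExoSetting S,
      solve S (applyIvn S F l) u = solve S (applyIvn S F' l) u) :
    ∀ A : Assignment S, Sat S F P A φ ↔ Sat S F' P A φ := by
  revert hφ hsolve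
  induction φ with
  | atom X x => intro _ _ A; rfl
  | neg φ ih => intro hφ hsolve A; exact not_congr (ih hφ hsolve A)
  | and φ χ ih1 ih2 =>
      intro hφ hsolve A
      refine and_congr (ih1 hφ.1 (fun l hl => hsolve l ?_) A)
        (ih2 hφ.2 (fun l hl => hsolve l ?_) A)
      · rcases hl with h | h
        · exact Or.inl h
        · exact Or.inr (Or.inl h)
      · rcases hl with h | h
        · exact Or.inl h
        · exact Or.inr (Or.inr h)
  | intervene l φ ih =>
      intro hφ hsolve A
      have hl : l ∈ insert ([] : Ivn S) (Formula.ivns (.intervene l φ)) :=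
        Set.mem_insert_iff.2 (Or.inr (Set.mem_insert _ _))
      have hsl : ∀ u : ExoSetting S,
          solve S (applyIvn S F l) u = solve S (applyIvn S F' l) u :=
        hsolve l hl
      show Sat S (applyIvn S F l) P
          (solve S (applyIvn S F l) (fun X => A (Sum.inl X))) φ ↔
        Sat S (applyIvn S F' l) P
          (solve S (applyIvn S F' l) (fun X => A (Sum.inl X))) φ
      rw [hsl]
      exact sat_ivnFree S _ _ P hsl φ hφ _
  | prec X x Y y => intro _ _ A; rfl
  | ctx u φ ih =>
      intro hφ hsolve A
      have hnil : solve S F u = solve S F' u := by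
        have := hsolve [] (Set.mem_insert _ _) u
        rwa [applyIvn_nil, applyIvn_nil] at this
      show Sat S F P (solve S F u) φ ↔ Sat S F' P (solve S F' u) φ
      rw [hnil]
      exact ih hφ hsolve _

/-- agreement lemma: let `φ` contain no nested interventions, and
let `R` consist of the interventions occurring in `φ` together with the empty
intervention.  If two causal deontic models `M`, `M'` over the same signature share
the priority ordering and the actual assignment, and for every intervention in `R`
and every exogenous setting the (unique) solutions of the correspondingly
intervened structural functions of `M` and of `M'` coincide, then `M ⊨ φ` iff
`M' ⊨ φ`. -/
theorem agreement_lemma (S : Signature) (M M' : CDModel S)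
    (hP : M.P = M'.P) (hA : M.A = M'.A) (φ : Formula S) (hφ : φ.noNested)
    (hagree : ∀ l ∈ insert ([] : Ivn S) φ.ivns, ∀ u : ExoSetting S,
      ∀ B B' : Assignment S,
        Complies S (applyIvn S M.F l) B → (∀ X : S.U, B (Sum.inl X) = u X) →
        Complies S (applyIvn S M'.F l) B' → (∀ X : S.U, B' (Sum.inl X) = u X) →
        B = B') :
    M.Sat φ ↔ M'.Sat φ := by
  have hsolve : ∀ l ∈ insert ([] : Ivn S) φ.ivns, ∀ u : ExoSetting S,
      solve S (applyIvn S M.F l) u = solve S (applyIvn S M'.F l) u := by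
    intro l hl u
    exact solve_eq S _ _ u
      (exists_complies S _ (recursive_applyIvn S M.F l M.recF) u)
      (exists_complies S _ (recursive_applyIvn S M'.F l M'.recF) u)
      (hagree l hl u)
  unfold CDModel.Sat
  rw [hP, hA]
  exact sat_noNested S M.F M'.F M'.P φ hφ hsolve M'.A
end
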